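/- Consider the repeated contest consisting of two centipede games with m = 2n decision nodes (n ≥ 1), where in the first game H is player 2 and AI is player 1, and in the second game the roles are swapped. If AI's player-1 strategy σ satisfies σ(0) ≤ 3/4 and AI's player-2 strategy is an arbitrary mixed strategy τ, then H, playing the stop-at-first-opportunity strategy δ₀ in both games, obtains a strictly greater total expected payoff than AI: Eu₂(σ, δ₀) + Eu₁(δ₀, τ) > Eu₁(σ, δ₀) + Eu₂(δ₀, τ); indeed the difference equals 4 − 4·σ(0) ≥ 1. -/
import Mathlib


open Finset

/-- Player 1's payoff in the reduced normal form of the centipede game with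
`m = 2n` decision nodes.  Strategy `a < n` means "stop at own `(a+1)`-th node";
`a = n` means "always continue". -/
noncomputable def u1 (n : ℕ) (a b : Fin (n + 1)) : ℝ :=
  if a ≤ b ∧ (a : ℕ) < n then 2 * ((a : ℕ) + 1)
  else if b < a then 2 * ((b : ℕ) + 1) - 1
  else 2 * n + 2

/-- Player 2's payoff in the reduced normal form of the centipede game. -/
noncomputable def u2 (n : ℕ) (a b : Fin (n + 1)) : ℝ :=
  if a ≤ b ∧ (a : ℕ) < n then 2 * ((a : ℕ) + 1) - 1
  else if b < a then 2 * ((b : ℕ) + 1) + 2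
  else 2 * n + 1

/-- A mixed strategy: a probability vector on `Fin (n+1)`. -/
def IsMixed {n : ℕ} (σ : Fin (n + 1) → ℝ) : Prop :=
  (∀ a, 0 ≤ σ a) ∧ ∑ a, σ a = 1

/-- Expected payoff under mixed strategies `σ` (player 1) and `τ` (player 2). -/
noncomputable def Eu {n : ℕ} (u : Fin (n + 1) → Fin (n + 1) → ℝ)
    (σ τ : Fin (n + 1) → ℝ) : ℝ :=
  ∑ a, ∑ b, σ a * τ b * u a b

/-- `(σ, τ)` is a (mixed) Nash equilibrium. -/
def IsNash (n : ℕ) (σ τ : Fin (n + 1) → ℝ) : Prop :=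
  IsMixed σ ∧ IsMixed τ ∧
    (∀ σ', IsMixed σ' → Eu (u1 n) σ' τ ≤ Eu (u1 n) σ τ) ∧
    (∀ τ', IsMixed τ' → Eu (u2 n) σ τ' ≤ Eu (u2 n) σ τ)

/-- The point mass on the pure strategy `a0`. -/
noncomputable def delta {n : ℕ} (a0 : Fin (n + 1)) : Fin (n + 1) → ℝ :=
  fun a => if a = a0 then 1 else 0

lemma u2_at0 (n : ℕ) (hn : 1 ≤ n) (a : Fin (n + 1)) :
    u2 n a 0 = if a = 0 then 1 else 4 := by
  rcases eq_or_ne a 0 with h | h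
  · subst h
    simp only [u2]
    norm_num [show 0 < n from hn]
  · have h1 : ¬ (a ≤ 0) := fun hle => h (Fin.le_zero_iff.mp hle)
    have h2 : (0 : Fin (n + 1)) < a := Fin.pos_of_ne_zero h
    simp only [u2, h1, false_and, if_false, h2, if_true, h]
    norm_num

lemma u1_at0 (n : ℕ) (hn : 1 ≤ n) (a : Fin (n + 1)) :
    u1 n a 0 = if a = 0 then 2 else 1 := by
  rcases eq_or_ne a 0 with h | h
  · subst h
    simp [u1, hn]
  · have h1 : ¬ (a ≤ 0) := fun hle => h (Fin.le_zero_iff.mp hle)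
    have h2 : (0 : Fin (n + 1)) < a := Fin.pos_of_ne_zero h
    simp only [u1, h1, false_and, if_false, h2, if_true, h]
    norm_num

lemma u1_0b (n : ℕ) (hn : 1 ≤ n) (b : Fin (n + 1)) : u1 n 0 b = 2 := by
  simp [u1, Fin.zero_le, hn]

lemma u2_0b (n : ℕ) (hn : 1 ≤ n) (b : Fin (n + 1)) : u2 n 0 b = 1 := by
  simp only [u2, Fin.zero_le, true_and]
  norm_num [show 0 < n from hn]

lemma Eu_delta_right {n : ℕ} (u : Fin (n + 1) → Fin (n + 1) → ℝ)
    (σ : Fin (n + 1) → ℝ) : Eu u σ (delta 0) = ∑ a, σ a * u a 0 := by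
  unfold Eu delta
  refine Finset.sum_congr rfl fun a _ => ?_
  rw [Finset.sum_eq_single 0]
  · simp
  · intro b _ hb; simp [hb]
  · simp

lemma Eu_delta_left {n : ℕ} (u : Fin (n + 1) → Fin (n + 1) → ℝ)
    (τ : Fin (n + 1) → ℝ) : Eu u (delta 0) τ = ∑ b, τ b * u 0 b := by
  unfold Eu delta
  rw [Finset.sum_eq_single 0]
  · refine Finset.sum_congr rfl fun b _ => ?_; ring_nf; simp
  · intro a _ ha; simp [ha]
  · simp

/-- In the repeated contest of two centipede games with roles
swapped, if AI's player-1 strategy `σ` has `σ(0) ≤ 3/4` and AI's player-2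
strategy is any mixed `τ`, then H, playing `δ₀` in both games, obtains a
strictly greater total payoff than AI; the difference is `4 − 4·σ(0) ≥ 1`. -/
theorem human_outperforms_in_contest (n : ℕ) (hn : 1 ≤ n)
    (σ τ : Fin (n + 1) → ℝ) (hσ : IsMixed σ) (hτ : IsMixed τ)
    (h0 : σ 0 ≤ 3 / 4) :
    Eu (u2 n) σ (delta 0) + Eu (u1 n) (delta 0) τ >
      Eu (u1 n) σ (delta 0) + Eu (u2 n) (delta 0) τ ∧
    (Eu (u2 n) σ (delta 0) + Eu (u1 n) (delta 0) τ) -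
      (Eu (u1 n) σ (delta 0) + Eu (u2 n) (delta 0) τ) = 4 - 4 * σ 0 ∧
    1 ≤ 4 - 4 * σ 0 := by
  obtain ⟨hσ0, hσ1⟩ := hσ
  obtain ⟨hτ0, hτ1⟩ := hτ
  have e1 : Eu (u2 n) σ (delta 0) = 4 - 3 * σ 0 := by
    rw [Eu_delta_right]
    have : ∀ a : Fin (n + 1), σ a * u2 n a 0
        = 4 * σ a - (if a = 0 then 3 * σ a else 0) := by
      intro a
      rw [u2_at0 n hn]
      rcases eq_or_ne a 0 with h | h <;> simp [h] <;> ring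
    rw [Finset.sum_congr rfl fun a _ => this a, Finset.sum_sub_distrib,
      ← Finset.mul_sum, hσ1, Finset.sum_ite_eq' _ (0 : Fin (n + 1))]
    simp
  have e2 : Eu (u1 n) σ (delta 0) = 1 + σ 0 := by
    rw [Eu_delta_right]
    have : ∀ a : Fin (n + 1), σ a * u1 n a 0
        = σ a + (if a = 0 then σ a else 0) := by
      intro a
      rw [u1_at0 n hn]
      rcases eq_or_ne a 0 with h | h <;> simp [h] <;> ring
    rw [Finset.sum_congr rfl fun a _ => this a, Finset.sum_add_distrib,
      hσ1, Finset.sum_ite_eq' _ (0 : Fin (n + 1))]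
    simp
  have e3 : Eu (u1 n) (delta 0) τ = 2 := by
    rw [Eu_delta_left]
    have : ∀ b : Fin (n + 1), τ b * u1 n 0 b = 2 * τ b := by
      intro b; rw [u1_0b n hn]; ring
    rw [Finset.sum_congr rfl fun b _ => this b, ← Finset.mul_sum, hτ1, mul_one]
  have e4 : Eu (u2 n) (delta 0) τ = 1 := by
    rw [Eu_delta_left]
    have : ∀ b : Fin (n + 1), τ b * u2 n 0 b = τ b := by
      intro b; rw [u2_0b n hn]; ring
    rw [Finset.sum_congr rfl fun b _ => this b, hτ1]
  refine ⟨by rw [e1, e2, e3, e4]; linarith, by rw [e1, e2, e3, e4]; ring, by linarith⟩
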